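/- Conditional caplet pricing formula: let (Ω, 𝓕, P) be a probability space, 𝓖 ⊆ 𝓕 a sub-σ-algebra, Z a standard Gaussian random variable independent of 𝓖, v > 0, 0 < T < S, κ > 0, and X a strictly positive, integrable, 𝓖-measurable random variable (modeling the forward price P_t(T)/P_t(S)). Set X_T := X·exp(v·Z − v²/2) and κ̄ := 1 + κ·(S − T). Then E[max(X_T − κ̄, 0) | 𝓖] = X·Φ⁰₊(κ̄, v, X) − κ̄·Φ⁰₋(κ̄, v, X) P-almost surely; that is, the caplet with payoff (S − T)·(L(T, T, S) − κ)⁺ = (P_T(S)^{−1} − (1 + κ(S − T)))⁺ on the LIBOR rate L(t, T, S) = (P_t(T) − P_t(S))/((S − T)·P_t(S)) is priced under the forward measure with numeraire P_t(S) by the Black–Scholes formula with strike 1 + κ(S − T). -/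

import Mathlib

open MeasureTheory Real ProbabilityTheory Set
open scoped ENNReal NNReal

/-- The standard normal cumulative distribution function. -/
noncomputable def Phi (x : ℝ) : ℝ :=
  ∫ z in Set.Iic x, Real.exp (-z^2/2) / Real.sqrt (2 * Real.pi)

noncomputable def stdPDF (z : ℝ) : ℝ := Real.exp (-z^2/2) / Real.sqrt (2 * Real.pi)

lemma stdPDF_eq : gaussianPDFReal 0 1 = stdPDF := by
  ext z
  simp [gaussianPDFReal, stdPDF, div_eq_inv_mul]

lemma stdPDF_nonneg (z : ℝ) : 0 ≤ stdPDF z := by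
  unfold stdPDF; positivity

lemma measurable_stdPDF : Measurable stdPDF := by
  rw [← stdPDF_eq]; exact measurable_gaussianPDFReal 0 1

lemma integrable_stdPDF : Integrable stdPDF := by
  rw [← stdPDF_eq]; exact integrable_gaussianPDFReal 0 1

lemma integral_stdPDF : ∫ z, stdPDF z = 1 := by
  rw [← stdPDF_eq]; exact integral_gaussianPDFReal_eq_one 0 one_ne_zero

lemma Phi_eq (x : ℝ) : Phi x = ∫ z in Set.Iic x, stdPDF z := rfl

lemma stdPDF_neg (z : ℝ) : stdPDF (-z) = stdPDF z := by simp [stdPDF]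

lemma monotone_Phi : Monotone Phi := by
  intro a b hab
  rw [Phi_eq, Phi_eq]
  refine setIntegral_mono_set integrable_stdPDF.integrableOn ?_ ?_
  · exact Filter.Eventually.of_forall fun z => stdPDF_nonneg z
  · exact Filter.Eventually.of_forall (Set.Iic_subset_Iic.2 hab)

lemma measurable_Phi : Measurable Phi := monotone_Phi.measurable

lemma Phi_nonneg (x : ℝ) : 0 ≤ Phi x :=
  setIntegral_nonneg measurableSet_Iic fun z _ => stdPDF_nonneg z

lemma Phi_le_one (x : ℝ) : Phi x ≤ 1 := by
  rw [Phi_eq, ← integral_stdPDF]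
  exact setIntegral_le_integral integrable_stdPDF
    (Filter.Eventually.of_forall fun z => stdPDF_nonneg z)

lemma integral_Ici_stdPDF (a : ℝ) : ∫ z in Set.Ici a, stdPDF z = Phi (-a) := by
  rw [Phi_eq, show (∫ z in Set.Iic (-a), stdPDF z) = ∫ z in Set.Iic (-a), stdPDF (-z) from
    by simp_rw [stdPDF_neg], integral_comp_neg_Iic, neg_neg, integral_Ici_eq_integral_Ioi]

lemma integral_Ici_shift (a w : ℝ) :
    ∫ z in Set.Ici a, stdPDF (z - w) = Phi (w - a) := by
  have A : MeasurableEmbedding fun x : ℝ => x + w :=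
    (Homeomorph.addRight w).isClosedEmbedding.measurableEmbedding
  have hmap : (volume : Measure ℝ).map (fun x => x + w) = volume :=
    map_add_right_eq_self volume w
  have := MeasurableEmbedding.setIntegral_map (μ := volume) A (fun z => stdPDF (z - w)) (Set.Ici a)
  rw [hmap] at this
  have hpre : (fun x : ℝ => x + w) ⁻¹' Set.Ici a = Set.Ici (a - w) := by
    ext x; simp [Set.mem_Ici, le_sub_iff_add_le, sub_le_iff_le_add]
  rw [this, hpre]
  simp only [add_sub_cancel_right]
  rw [integral_Ici_stdPDF, neg_sub]

lemma exp_mul_stdPDF (w z : ℝ) :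
    Real.exp (w * z - w^2/2) * stdPDF z = stdPDF (z - w) := by
  unfold stdPDF
  rw [div_eq_mul_inv, div_eq_mul_inv, ← mul_assoc, ← Real.exp_add]
  congr 2
  ring

lemma integral_gaussian_eq (g : ℝ → ℝ) :
    ∫ z, g z ∂(gaussianReal 0 1) = ∫ z, stdPDF z * g z := by
  rw [gaussianReal_of_var_ne_zero 0 one_ne_zero]
  have hd : gaussianPDF 0 1 = fun z => ((stdPDF z).toNNReal : ℝ≥0∞) := by
    ext z
    rw [gaussianPDF, stdPDF_eq, ENNReal.ofReal]
  rw [hd]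
  rw [integral_withDensity_eq_integral_smul
    (measurable_stdPDF.real_toNNReal) g]
  congr 1
  ext z
  rw [NNReal.smul_def, Real.coe_toNNReal _ (stdPDF_nonneg z), smul_eq_mul]

lemma gauss_formula {x κb w : ℝ} (hx : 0 < x) (hκ : 0 < κb) (hw : 0 < w) :
    ∫ z, max (x * Real.exp (w * z - w^2/2) - κb) 0 ∂(gaussianReal 0 1)
      = x * Phi (Real.log (x / κb) / w + w / 2)
        - κb * Phi (Real.log (x / κb) / w - w / 2) := by
  set z₀ : ℝ := Real.log (κb / x) / w + w / 2 with hz₀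
  have hlog : Real.log (x / κb) = - Real.log (κb / x) := by
    rw [← Real.log_inv, inv_div]
  have hcrit : ∀ z : ℝ, z₀ ≤ z ↔ κb ≤ x * Real.exp (w * z - w^2/2) := by
    intro z
    rw [mul_comm x, ← div_le_iff₀ hx, ← Real.log_le_iff_le_exp (div_pos hκ hx)]
    rw [show (z₀ ≤ z) ↔ w * z₀ ≤ w * z from (mul_le_mul_iff_right₀ hw).symm,
      show w * z₀ = Real.log (κb / x) + w^2/2 by rw [hz₀]; field_simp]
    constructor <;> intro h <;> linarith
  have hind : (fun z => max (x * Real.exp (w * z - w^2/2) - κb) 0 * stdPDF z)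
      = Set.indicator (Set.Ici z₀)
        (fun z => x * stdPDF (z - w) - κb * stdPDF z) := by
    ext z
    by_cases hz : z₀ ≤ z
    · rw [Set.indicator_of_mem (Set.mem_Ici.2 hz), max_eq_left (sub_nonneg.2 ((hcrit z).1 hz)),
        ← exp_mul_stdPDF w z]
      ring
    · rw [Set.indicator_of_notMem (fun hc => hz (Set.mem_Ici.1 hc)),
        max_eq_right (sub_nonpos.2 (by
          have h1 : ¬ κb ≤ x * Real.exp (w * z - w^2/2) := fun hc => hz ((hcrit z).2 hc)
          linarith [lt_of_not_ge h1])),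
        zero_mul]
  have hi1 : IntegrableOn (fun z => x * stdPDF (z - w)) (Set.Ici z₀) volume :=
    (((integrable_stdPDF.comp_sub_right w).const_mul x).integrableOn)
  have hi2 : IntegrableOn (fun z => κb * stdPDF z) (Set.Ici z₀) volume :=
    ((integrable_stdPDF.const_mul κb).integrableOn)
  calc ∫ z, max (x * Real.exp (w * z - w^2/2) - κb) 0 ∂(gaussianReal 0 1)
      = ∫ z, max (x * Real.exp (w * z - w^2/2) - κb) 0 * stdPDF z := by
        rw [integral_gaussian_eq]; congr 1; ext z; ring
    _ = ∫ z, Set.indicator (Set.Ici z₀)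
          (fun z => x * stdPDF (z - w) - κb * stdPDF z) z := by rw [hind]
    _ = ∫ z in Set.Ici z₀, (x * stdPDF (z - w) - κb * stdPDF z) := by
        rw [integral_indicator measurableSet_Ici]
    _ = x * (∫ z in Set.Ici z₀, stdPDF (z - w)) - κb * ∫ z in Set.Ici z₀, stdPDF z := by
        rw [integral_sub hi1 hi2, integral_const_mul, integral_const_mul]
    _ = x * Phi (w - z₀) - κb * Phi (-z₀) := by
        rw [integral_Ici_shift, integral_Ici_stdPDF]
    _ = x * Phi (Real.log (x / κb) / w + w / 2)
        - κb * Phi (Real.log (x / κb) / w - w / 2) := by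
        rw [hz₀, hlog]
        congr 2 <;> field_simp <;> ring

lemma integrable_gaussian_iff {h : ℝ → ℝ} :
    Integrable h (gaussianReal 0 1) ↔ Integrable (fun z => stdPDF z * h z) := by
  rw [gaussianReal_of_var_ne_zero 0 one_ne_zero,
    show gaussianPDF 0 1 = fun z => ((stdPDF z).toNNReal : ℝ≥0∞) from by
      ext z; rw [gaussianPDF, stdPDF_eq, ENNReal.ofReal],
    integrable_withDensity_iff_integrable_smul measurable_stdPDF.real_toNNReal]
  refine integrable_congr (Filter.Eventually.of_forall fun z => ?_)
  show ((stdPDF z).toNNReal : ℝ≥0) • h z = stdPDF z * h z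
  rw [NNReal.smul_def, Real.coe_toNNReal _ (stdPDF_nonneg z), smul_eq_mul]

/-- Conditional caplet pricing formula: with `Z` standard Gaussian independent of `m`,
`v > 0`, `0 < T < S`, `κ > 0`, `X > 0` integrable and `m`-measurable (modeling the
forward price `P_t(T)/P_t(S)`), `XT = X·exp(v·Z − v²/2)` and `κ̄ = 1 + κ·(S − T)`, the
caplet on the LIBOR rate is priced by
`E[max(XT − κ̄, 0) | m] = X·Φ(log(X/κ̄)/v + v/2) − κ̄·Φ(log(X/κ̄)/v − v/2)` a.s. -/
theorem conditional_caplet_pricing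
    {Ω : Type*} {m : MeasurableSpace Ω} [MeasurableSpace Ω]
    (hm : m ≤ (inferInstance : MeasurableSpace Ω))
    (P : Measure Ω) [IsProbabilityMeasure P]
    (Z : Ω → ℝ) (hZmeas : Measurable Z)
    (hZlaw : P.map Z = ProbabilityTheory.gaussianReal 0 1)
    (hindep : ProbabilityTheory.Indep (MeasurableSpace.comap Z inferInstance) m P)
    {v T S κ : ℝ} (hv : 0 < v) (hT : 0 < T) (hTS : T < S) (hκ : 0 < κ)
    (X : Ω → ℝ) (hXpos : ∀ ω, 0 < X ω) (hXint : Integrable X P)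
    (hXmeas : StronglyMeasurable[m] X)
    (XT : Ω → ℝ) (hXT : XT = fun ω => X ω * Real.exp (v * Z ω - v^2/2))
    (κbar : ℝ) (hκbar : κbar = 1 + κ * (S - T)) :
    P[fun ω => max (XT ω - κbar) 0|m]
      =ᵐ[P] fun ω => X ω * Phi (Real.log (X ω / κbar) / v + v / 2)
                      - κbar * Phi (Real.log (X ω / κbar) / v - v / 2) := by
  have hκb : 0 < κbar := by rw [hκbar]; nlinarith
  set g : ℝ → ℝ := fun x => x * Phi (Real.log (x / κbar) / v + v / 2)
      - κbar * Phi (Real.log (x / κbar) / v - v / 2) with hg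
  have measurable_g : Measurable g := by
    have m1 : Measurable fun x : ℝ => Phi (Real.log (x / κbar) / v + v / 2) :=
      measurable_Phi.comp
        (((Real.measurable_log.comp (measurable_id.div_const _)).div_const _).add_const _)
    have m2 : Measurable fun x : ℝ => Phi (Real.log (x / κbar) / v - v / 2) :=
      measurable_Phi.comp
        (((Real.measurable_log.comp (measurable_id.div_const _)).div_const _).sub_const _)
    exact (measurable_id.mul m1).sub (m2.const_mul κbar)
  set E : Ω → ℝ := fun ω => Real.exp (v * Z ω - v^2/2) with hE
  have hh : Measurable fun z : ℝ => Real.exp (v * z - v^2/2) :=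
    Real.measurable_exp.comp ((measurable_const.mul measurable_id).sub_const _)
  have hZm : Measurable[MeasurableSpace.comap Z inferInstance] Z :=
    Measurable.of_comap_le le_rfl
  have hEmZ : Measurable[MeasurableSpace.comap Z inferInstance] E := hh.comp hZm
  have hEmeas : Measurable E := hh.comp hZmeas
  have hXm : Measurable X := hXmeas.measurable.mono hm le_rfl
  have hE_int : Integrable E P := by
    have h1 : Integrable (fun z : ℝ => Real.exp (v * z - v^2/2)) (P.map Z) := by
      rw [hZlaw, integrable_gaussian_iff]
      refine (integrable_stdPDF.comp_sub_right v).congr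
        (Filter.Eventually.of_forall fun z => ?_)
      show stdPDF (z - v) = stdPDF z * Real.exp (v * z - v^2/2)
      rw [← exp_mul_stdPDF v z, mul_comm]
    exact (integrable_map_measure hh.aestronglyMeasurable hZmeas.aemeasurable).1 h1
  have hIndepXE : IndepFun X E P :=
    indep_of_indep_of_le_right
      (indep_of_indep_of_le_left hindep.symm hXmeas.measurable.comap_le) hEmZ.comap_le
  have hXTint : Integrable XT P := by
    rw [hXT]; exact hIndepXE.integrable_mul hXint hE_int
  have hfint : Integrable (fun ω => max (XT ω - κbar) 0) P :=
    (hXTint.sub (integrable_const κbar)).pos_part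
  have hXTmeas : Measurable XT := by rw [hXT]; exact hXm.mul hEmeas
  have hgX : StronglyMeasurable[m] (fun ω => g (X ω)) :=
    (measurable_g.comp hXmeas.measurable).stronglyMeasurable
  have hgXint : Integrable (fun ω => g (X ω)) P := by
    refine Integrable.mono (hXint.norm.add (integrable_const κbar))
      ((measurable_g.comp hXm).aestronglyMeasurable)
      (Filter.Eventually.of_forall fun ω => ?_)
    have hb1 : |Phi (Real.log (X ω / κbar) / v + v / 2)| ≤ 1 :=
      abs_le.2 ⟨by linarith [Phi_nonneg (Real.log (X ω / κbar) / v + v / 2)],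
        Phi_le_one _⟩
    have hb2 : |Phi (Real.log (X ω / κbar) / v - v / 2)| ≤ 1 :=
      abs_le.2 ⟨by linarith [Phi_nonneg (Real.log (X ω / κbar) / v - v / 2)],
        Phi_le_one _⟩
    have h1 : |X ω * Phi (Real.log (X ω / κbar) / v + v / 2)| ≤ |X ω| := by
      rw [abs_mul]; exact mul_le_of_le_one_right (abs_nonneg _) hb1
    have h2 : |κbar * Phi (Real.log (X ω / κbar) / v - v / 2)| ≤ κbar := by
      rw [abs_mul, abs_of_pos hκb]; exact mul_le_of_le_one_right hκb.le hb2
    have := abs_sub (X ω * Phi (Real.log (X ω / κbar) / v + v / 2))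
      (κbar * Phi (Real.log (X ω / κbar) / v - v / 2))
    simp only [Real.norm_eq_abs, hg, Pi.add_apply]
    rw [abs_of_nonneg (by positivity : (0:ℝ) ≤ |X ω| + κbar)]
    exact le_trans this (by linarith)
  refine (ae_eq_condExp_of_forall_setIntegral_eq hm hfint
    (fun s _ _ => hgXint.integrableOn) (fun s hs _ => ?_)
    hgX.aestronglyMeasurable).symm
  -- the set-integral identity
  set ι : Ω → ℝ := Set.indicator s (fun _ => (1:ℝ)) with hι
  have hιm : Measurable[m] ι := measurable_const.indicator hs
  have hιmeas : Measurable ι := measurable_const.indicator (hm s hs)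
  set Y : Ω → ℝ × ℝ := fun ω => (X ω, ι ω) with hY
  have hYm : Measurable[m] Y := hXmeas.measurable.prodMk hιm
  have hYmeas : Measurable Y := hYm.mono hm le_rfl
  set W : Ω → (ℝ × ℝ) × ℝ := fun ω => (Y ω, Z ω) with hW
  have hWmeas : Measurable W := hYmeas.prodMk hZmeas
  set H : (ℝ × ℝ) × ℝ → ℝ :=
    fun p => p.1.2 * max (p.1.1 * Real.exp (v * p.2 - v^2/2) - κbar) 0 with hH
  have hHmeas : Measurable H := by
    refine (measurable_fst.snd).mul (Measurable.max ?_ measurable_const)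
    exact ((measurable_fst.fst).mul
      (Real.measurable_exp.comp ((measurable_snd.const_mul v).sub_const _))).sub_const _
  have hindYZ : IndepFun Y Z P :=
    indep_of_indep_of_le_left hindep.symm hYm.comap_le
  have hmapW : P.map W = (P.map Y).prod (P.map Z) :=
    (indepFun_iff_map_prod_eq_prod_map_map hYmeas.aemeasurable hZmeas.aemeasurable).1 hindYZ
  have hHW : (fun ω => H (W ω)) = fun ω => ι ω * max (XT ω - κbar) 0 := by
    funext ω; simp only [hH, hW, hY, hXT]
  have hHWint : Integrable (fun ω => H (W ω)) P := by
    rw [hHW]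
    refine Integrable.mono hfint
      ((hιmeas.mul ((hXTmeas.sub_const _).max measurable_const)).aestronglyMeasurable)
      (Filter.Eventually.of_forall fun ω => ?_)
    have hb : |ι ω| ≤ 1 := by
      by_cases hω : ω ∈ s <;> simp [hι, hω]
    simp only [Real.norm_eq_abs, abs_mul]
    exact mul_le_of_le_one_left (abs_nonneg _) hb
  have hHint : Integrable H ((P.map Y).prod (P.map Z)) := by
    rw [← hmapW]
    exact (integrable_map_measure hHmeas.aestronglyMeasurable hWmeas.aemeasurable).2 hHWint
  have : IsProbabilityMeasure (P.map Y) := Measure.isProbabilityMeasure_map hYmeas.aemeasurable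
  have : IsProbabilityMeasure (P.map Z) := Measure.isProbabilityMeasure_map hZmeas.aemeasurable
  have haeX : ∀ᵐ y ∂(P.map Y), 0 < y.1 := by
    rw [ae_map_iff hYmeas.aemeasurable (measurableSet_lt measurable_const measurable_fst)]
    exact Filter.Eventually.of_forall fun ω => hXpos ω
  calc ∫ ω in s, g (X ω) ∂P
      = ∫ ω, ι ω * g (X ω) ∂P := by
        rw [← integral_indicator (hm s hs)]
        congr 1; funext ω
        by_cases hω : ω ∈ s <;> simp [hι, hω]
    _ = ∫ y, y.2 * g y.1 ∂(P.map Y) :=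
        (integral_map hYmeas.aemeasurable
          ((measurable_snd.mul (measurable_g.comp measurable_fst)).aestronglyMeasurable)).symm
    _ = ∫ y, (∫ z, H (y, z) ∂(P.map Z)) ∂(P.map Y) := by
        refine integral_congr_ae ?_
        filter_upwards [haeX] with y hy
        rw [hZlaw]
        calc y.2 * g y.1
            = y.2 * ∫ z, max (y.1 * Real.exp (v * z - v^2/2) - κbar) 0
                ∂(gaussianReal 0 1) := by rw [gauss_formula hy hκb hv]
          _ = ∫ z, H (y, z) ∂(gaussianReal 0 1) := (integral_const_mul _ _).symm
    _ = ∫ p, H p ∂((P.map Y).prod (P.map Z)) := (integral_prod H hHint).symm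
    _ = ∫ ω, H (W ω) ∂P := by
        rw [← hmapW]
        exact integral_map hWmeas.aemeasurable hHmeas.aestronglyMeasurable
    _ = ∫ ω, ι ω * max (XT ω - κbar) 0 ∂P := by rw [hHW]
    _ = ∫ ω in s, max (XT ω - κbar) 0 ∂P := by
        rw [← integral_indicator (hm s hs)]
        congr 1; funext ω
        by_cases hω : ω ∈ s <;> simp [hι, hω]
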